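/- The inverse semigroup S_X generated inside I(X) by {s_ε} ∪ {s_a : a ∈ A} equals the set {s_α E(F;v) s_β* : α, β, v ∈ A*, F ⊆ A* finite} ∪ {0}. -/

import Mathlib

open Function

/-- The one-sided shift map on `ℕ → A`. -/
def shft {A : Type*} (x : ℕ → A) : ℕ → A := fun n => x (n + 1)

/-- Concatenation of a finite word `w` with an infinite word `x`. -/
def wcat {A : Type*} (w : List A) (x : ℕ → A) : ℕ → A :=
  fun n => w.getD n (x (n - w.length))

/-- Partial bijections on `ℕ → A` modelled as relations (sets of pairs (input, output)). -/
abbrev PB (A : Type*) := Set ((ℕ → A) × (ℕ → A))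

/-- Composition on the largest possible domain: `rcomp r s` applies `s` first, then `r`
(i.e. the semigroup product `r · s`). -/
def rcomp {A : Type*} (r s : PB A) : PB A := {p | ∃ y, (p.1, y) ∈ s ∧ (y, p.2) ∈ r}

/-- Inverse of a partial bijection. -/
def rinv {A : Type*} (r : PB A) : PB A := {p | (p.2, p.1) ∈ r}

/-- The identity map on a subset `U`. -/
def idOn {A : Type*} (U : Set (ℕ → A)) : PB A := {p | p.1 ∈ U ∧ p.2 = p.1}

/-- The partial bijection `s_μ : x ↦ μx` on `{x ∈ X : μx ∈ X}`. -/
def sMap {A : Type*} (X : Set (ℕ → A)) (μ : List A) : PB A :=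
  {p | p.1 ∈ X ∧ wcat μ p.1 ∈ X ∧ p.2 = wcat μ p.1}

/-- The cylinder set `C(v) = {vx : x ∈ A^ℕ} ∩ X`. -/
def Cyl {A : Type*} (X : Set (ℕ → A)) (v : List A) : Set (ℕ → A) :=
  {y | y ∈ X ∧ ∃ x, y = wcat v x}

/-- `C(μ,ν) = {νx ∈ X : μx ∈ X}`. -/
def Cmn {A : Type*} (X : Set (ℕ → A)) (μ ν : List A) : Set (ℕ → A) :=
  {y | ∃ x, y = wcat ν x ∧ y ∈ X ∧ wcat μ x ∈ X}

/-- `C(F;v) = {vx ∈ X : fx ∈ X for all f ∈ F}`. -/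
def CFv {A : Type*} (X : Set (ℕ → A)) (F : Finset (List A)) (v : List A) : Set (ℕ → A) :=
  {y | ∃ x, y = wcat v x ∧ y ∈ X ∧ ∀ f ∈ F, wcat f x ∈ X}

/-- The idempotent `E(F;v) = Id_{C(F;v)}`. -/
def Efv {A : Type*} (X : Set (ℕ → A)) (F : Finset (List A)) (v : List A) : PB A :=
  idOn (CFv X F v)

/-- The set `E_X = {E(F;v)} ∪ {0}` of idempotents. -/
def EXset {A : Type*} (X : Set (ℕ → A)) : Set (PB A) :=
  {r | r = ∅ ∨ ∃ (F : Finset (List A)) (v : List A), r = Efv X F v}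

/-- The element `s_α E(F;v) s_β^*` of `I(X)`. -/
def elt {A : Type*} (X : Set (ℕ → A)) (α : List A) (F : Finset (List A)) (v β : List A) :
    PB A :=
  rcomp (rcomp (sMap X α) (Efv X F v)) (rinv (sMap X β))

/-- The inverse semigroup `S_X = {s_α E(F;v) s_β^*} ∪ {0}` (closed form). -/
def SXset {A : Type*} (X : Set (ℕ → A)) : Set (PB A) :=
  {r | r = ∅ ∨ ∃ (α β v : List A) (F : Finset (List A)), r = elt X α F v β}

/-- `α` and `β` are in lowest terms: they do not both end with the same letter. -/
def LowTerms {A : Type*} (α β : List A) : Prop :=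
  ∀ a : A, ¬(α.getLast? = some a ∧ β.getLast? = some a)

/-- A word viewed as an element of the free group on `A`. -/
def wgrp {A : Type*} (w : List A) : FreeGroup A := (w.map FreeGroup.of).prod

/-- Natural partial order on partial bijections: `s ≤ t` iff `t s^* s = s`. -/
def rle {A : Type*} (s t : PB A) : Prop := rcomp t (rcomp (rinv s) s) = s

/-- `P_k(x) = {μ ∈ A^k : μx ∈ X}`. -/
def Pk {A : Type*} (X : Set (ℕ → A)) (k : ℕ) (x : ℕ → A) : Set (List A) :=
  {μ | μ.length = k ∧ wcat μ x ∈ X}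

/-- `l`-past equivalence: `P_r(x) = P_r(y)` for all `r ≤ l`. -/
def pastEq {A : Type*} (X : Set (ℕ → A)) (l : ℕ) (x y : ℕ → A) : Prop :=
  ∀ r ≤ l, Pk X r x = Pk X r y

/-- The relation `x ~_{(k,l)} y`. -/
def klEq {A : Type*} (X : Set (ℕ → A)) (k l : ℕ) (x y : ℕ → A) : Prop :=
  (∀ i < k, x i = y i) ∧ pastEq X l (shft^[k] x) (shft^[k] y)

/-- The inverse subsemigroup (with zero) of `I(X)` generated by `s_ε` and the `s_a`, `a ∈ A`. -/
inductive GenSX {A : Type*} (X : Set (ℕ → A)) : PB A → Prop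
  | eps : GenSX X (sMap X [])
  | base (a : A) : GenSX X (sMap X [a])
  | zero : GenSX X ∅
  | comp : ∀ {r s : PB A}, GenSX X r → GenSX X s → GenSX X (rcomp r s)
  | inv : ∀ {r : PB A}, GenSX X r → GenSX X (rinv r)


/-!
Every element of `S_X` other than `0` is a *prefix swap* `βz ↦ αz`, defined on the points `z`
of `X` that can follow each word of a finite set `F` (and `α`, `β`); it factors as
`s_α (∏_{f ∈ F} s_f^* s_f) s_β^*`, so it is generated. Conversely the generators are prefix swaps,
and prefix swaps are closed under inversion and, together with `0`, under composition: the product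
of `βz ↦ αz` after `δz ↦ γz` is `0` unless one of `β`, `γ` is a prefix of the other, and if
`γ = βτ` it is the prefix swap `δz ↦ ατz`. Finally `s_α E(F;v) s_β^*` is the prefix swap of
`αv`, `βv` and `F ∪ {v}`.
-/
section

variable {A : Type*}

@[simp]
theorem wcat_nil (x : ℕ → A) : wcat [] x = x := by
  funext n; simp [wcat]

theorem shft_wcat_cons (a : A) (w : List A) (x : ℕ → A) : shft (wcat (a :: w) x) = wcat w x := by
  funext n; simp [shft, wcat]

theorem wcat_append (u v : List A) (x : ℕ → A) : wcat (u ++ v) x = wcat u (wcat v x) := by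
  induction u with
  | nil => simp
  | cons a u ih =>
    funext n
    cases n with
    | zero => rfl
    | succ n =>
      exact congrFun ((shft_wcat_cons a _ x).trans (ih.trans (shft_wcat_cons a u _).symm)) n

theorem wcat_right_injective (w : List A) : Injective (wcat w) := by
  induction w with
  | nil => intro x y h; simpa using h
  | cons a w ih => exact fun x y h => ih (by rw [← shft_wcat_cons a w x, h, shft_wcat_cons])

theorem prefix_or_prefix_of_wcat_eq_wcat {p q : List A} {z u : ℕ → A} (h : wcat p z = wcat q u) :
    p <+: q ∨ q <+: p := by
  induction p generalizing q with
  | nil => exact .inl (List.nil_prefix)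
  | cons a p ih =>
    cases q with
    | nil => exact .inr (List.nil_prefix)
    | cons b q =>
      obtain rfl : a = b := congrFun h 0
      have ht : wcat p z = wcat q u := by rw [← shft_wcat_cons a p z, h, shft_wcat_cons]
      simpa only [List.cons_prefix_cons, true_and] using ih ht

theorem mem_of_wcat_mem {X : Set (ℕ → A)} (hXsh : ∀ x ∈ X, shft x ∈ X) {w : List A} {x : ℕ → A}
    (h : wcat w x ∈ X) : x ∈ X := by
  induction w with
  | nil => rwa [wcat_nil] at h
  | cons a w ih => exact ih (shft_wcat_cons a w x ▸ hXsh _ h)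

theorem rinv_rcomp (r s : PB A) : rinv (rcomp r s) = rcomp (rinv s) (rinv r) := by
  ext p
  exact ⟨fun ⟨y, h1, h2⟩ => ⟨y, h2, h1⟩, fun ⟨y, h1, h2⟩ => ⟨y, h2, h1⟩⟩

theorem rinv_rinv (r : PB A) : rinv (rinv r) = r := rfl

theorem rcomp_eq_rinv_rcomp_rinv (r s : PB A) : rcomp r s = rinv (rcomp (rinv s) (rinv r)) := by
  rw [rinv_rcomp, rinv_rinv, rinv_rinv]

@[simp]
theorem rinv_empty : rinv (∅ : PB A) = ∅ := rfl

@[simp]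
theorem rcomp_empty_left (s : PB A) : rcomp ∅ s = ∅ := by
  ext p; simp [rcomp]

@[simp]
theorem rcomp_empty_right (r : PB A) : rcomp r ∅ = ∅ := by
  ext p; simp [rcomp]

theorem idOn_rcomp_idOn (U V : Set (ℕ → A)) : rcomp (idOn U) (idOn V) = idOn (U ∩ V) := by
  ext ⟨x, y⟩
  simp only [rcomp, idOn, Set.mem_ofPred_eq, Set.mem_inter_iff]
  constructor
  · rintro ⟨_, ⟨hV, rfl⟩, hU, rfl⟩; exact ⟨⟨hU, hV⟩, rfl⟩
  · rintro ⟨⟨hU, hV⟩, rfl⟩; exact ⟨_, ⟨hV, rfl⟩, hU, rfl⟩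

variable {X : Set (ℕ → A)}

theorem sMap_nil : sMap X [] = idOn X := by
  ext p; simp [sMap, idOn]

theorem sMap_append (hXsh : ∀ x ∈ X, shft x ∈ X) (μ ν : List A) :
    rcomp (sMap X μ) (sMap X ν) = sMap X (μ ++ ν) := by
  ext ⟨x, y⟩
  simp only [rcomp, sMap, Set.mem_ofPred_eq, wcat_append]
  constructor
  · rintro ⟨_, ⟨hx, -, rfl⟩, -, hμν, rfl⟩; exact ⟨hx, hμν, rfl⟩
  · rintro ⟨hx, hμν, rfl⟩
    have hν := mem_of_wcat_mem hXsh hμν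
    exact ⟨_, ⟨hx, hν, rfl⟩, hν, hμν, rfl⟩

def commonFollowers (X : Set (ℕ → A)) (F : Finset (List A)) : Set (ℕ → A) :=
  {z | z ∈ X ∧ ∀ f ∈ F, wcat f z ∈ X}

theorem rinv_sMap_rcomp_sMap (f : List A) :
    rcomp (rinv (sMap X f)) (sMap X f) = idOn (commonFollowers X {f}) := by
  ext ⟨x, y⟩
  simp only [rcomp, rinv, sMap, idOn, commonFollowers, Set.mem_ofPred_eq, Finset.mem_singleton,
    forall_eq]
  constructor
  · rintro ⟨_, ⟨hx, hf, rfl⟩, -, -, h⟩; exact ⟨⟨hx, hf⟩, wcat_right_injective f h.symm⟩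
  · rintro ⟨⟨hx, hf⟩, rfl⟩; exact ⟨_, ⟨hx, hf, rfl⟩, hx, hf, rfl⟩

theorem commonFollowers_cons (f : List A) (F : Finset (List A)) (hf : f ∉ F) :
    commonFollowers X (F.cons f hf) = commonFollowers X F ∩ commonFollowers X {f} := by
  ext z; simp [commonFollowers, and_comm, and_left_comm, and_assoc]

theorem genSX_sMap (hXsh : ∀ x ∈ X, shft x ∈ X) (μ : List A) : GenSX X (sMap X μ) := by
  induction μ with
  | nil => exact .eps
  | cons a μ ih => simpa only [sMap_append hXsh, List.singleton_append] using (GenSX.base a).comp ih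

theorem genSX_idOn_commonFollowers (hXsh : ∀ x ∈ X, shft x ∈ X) (F : Finset (List A)) :
    GenSX X (idOn (commonFollowers X F)) := by
  induction F using Finset.cons_induction with
  | empty => simpa [commonFollowers, ← sMap_nil] using GenSX.eps
  | cons f F hf ih =>
    rw [commonFollowers_cons, ← idOn_rcomp_idOn, ← rinv_sMap_rcomp_sMap]
    exact ih.comp ((genSX_sMap hXsh f).inv.comp (genSX_sMap hXsh f))

def prefixSwap (X : Set (ℕ → A)) (F : Finset (List A)) (α β : List A) : PB A :=
  {p | ∃ z ∈ commonFollowers X F, wcat α z ∈ X ∧ wcat β z ∈ X ∧ p = (wcat β z, wcat α z)}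

theorem prefixSwap_eq_rcomp (F : Finset (List A)) (α β : List A) :
    prefixSwap X F α β =
      rcomp (rcomp (sMap X α) (idOn (commonFollowers X F))) (rinv (sMap X β)) := by
  ext ⟨x, y⟩
  simp only [prefixSwap, rcomp, rinv, sMap, idOn, Set.mem_ofPred_eq, Prod.mk.injEq]
  constructor
  · rintro ⟨z, hz, hα, hβ, rfl, rfl⟩; exact ⟨z, ⟨hz.1, hβ, rfl⟩, z, ⟨hz, rfl⟩, hz.1, hα, rfl⟩
  · rintro ⟨_, ⟨-, hβ, rfl⟩, _, ⟨hz, rfl⟩, -, hα, rfl⟩; exact ⟨_, hz, hα, hβ, rfl, rfl⟩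

theorem genSX_prefixSwap (hXsh : ∀ x ∈ X, shft x ∈ X) (F : Finset (List A)) (α β : List A) :
    GenSX X (prefixSwap X F α β) := by
  rw [prefixSwap_eq_rcomp]
  exact ((genSX_sMap hXsh α).comp (genSX_idOn_commonFollowers hXsh F)).comp (genSX_sMap hXsh β).inv

theorem rinv_prefixSwap (F : Finset (List A)) (α β : List A) :
    rinv (prefixSwap X F α β) = prefixSwap X F β α := by
  ext ⟨x, y⟩
  simp only [prefixSwap, rinv, Set.mem_ofPred_eq, Prod.mk.injEq]
  exact ⟨fun ⟨z, hz, hβ, hα, h1, h2⟩ => ⟨z, hz, hα, hβ, h2, h1⟩,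
    fun ⟨z, hz, hα, hβ, h1, h2⟩ => ⟨z, hz, hβ, hα, h2, h1⟩⟩

theorem sMap_eq_prefixSwap (μ : List A) : sMap X μ = prefixSwap X ∅ μ [] := by
  ext ⟨x, y⟩
  simp only [sMap, prefixSwap, commonFollowers, Set.mem_ofPred_eq, Finset.notMem_empty,
    IsEmpty.forall_iff, implies_true, and_true, wcat_nil, Prod.mk.injEq]
  constructor
  · rintro ⟨hx, hμ, rfl⟩; exact ⟨x, hx, hμ, hx, rfl, rfl⟩
  · rintro ⟨z, hz, hμ, -, rfl, rfl⟩; exact ⟨hz, hμ, rfl⟩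

theorem elt_eq_prefixSwap [DecidableEq A] (hXsh : ∀ x ∈ X, shft x ∈ X) (α : List A)
    (F : Finset (List A)) (v β : List A) :
    elt X α F v β = prefixSwap X (insert v F) (α ++ v) (β ++ v) := by
  ext ⟨x, y⟩
  simp only [elt, prefixSwap, rcomp, rinv, sMap, Efv, idOn, CFv, commonFollowers,
    Set.mem_ofPred_eq, Finset.forall_mem_insert, wcat_append, Prod.mk.injEq]
  constructor
  · rintro ⟨_, ⟨-, hβ, rfl⟩, _, ⟨⟨z, rfl, hv, hF⟩, rfl⟩, -, hα, rfl⟩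
    exact ⟨z, ⟨mem_of_wcat_mem hXsh hv, hv, hF⟩, hα, hβ, rfl, rfl⟩
  · rintro ⟨z, ⟨-, hv, hF⟩, hα, hβ, rfl, rfl⟩
    exact ⟨_, ⟨hv, hβ, rfl⟩, _, ⟨⟨z, rfl, hv, hF⟩, rfl⟩, hv, hα, rfl⟩

theorem prefixSwap_eq_elt (F : Finset (List A)) (α β : List A) :
    prefixSwap X F α β = elt X α F [] β := by
  ext ⟨x, y⟩
  simp only [elt, prefixSwap, rcomp, rinv, sMap, Efv, idOn, CFv, commonFollowers,
    Set.mem_ofPred_eq, wcat_nil, Prod.mk.injEq]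
  constructor
  · rintro ⟨z, ⟨hz, hF⟩, hα, hβ, rfl, rfl⟩
    exact ⟨z, ⟨hz, hβ, rfl⟩, z, ⟨⟨z, rfl, hz, hF⟩, rfl⟩, hz, hα, rfl⟩
  · rintro ⟨_, ⟨-, hβ, rfl⟩, _, ⟨⟨z, rfl, hz, hF⟩, rfl⟩, -, hα, rfl⟩
    exact ⟨_, ⟨hz, hF⟩, hα, hβ, rfl, rfl⟩

theorem empty_mem_SXset : ∅ ∈ SXset X := .inl rfl

theorem prefixSwap_mem_SXset (F : Finset (List A)) (α β : List A) :
    prefixSwap X F α β ∈ SXset X :=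
  .inr ⟨α, β, [], F, prefixSwap_eq_elt F α β⟩

theorem mem_SXset_iff (hXsh : ∀ x ∈ X, shft x ∈ X) {r : PB A} :
    r ∈ SXset X ↔ r = ∅ ∨ ∃ F α β, r = prefixSwap X F α β := by
  classical
  constructor
  · rintro (rfl | ⟨α, β, v, F, rfl⟩)
    · exact .inl rfl
    · exact .inr ⟨_, _, _, elt_eq_prefixSwap hXsh α F v β⟩
  · rintro (rfl | ⟨F, α, β, rfl⟩)
    · exact empty_mem_SXset
    · exact prefixSwap_mem_SXset F α β

theorem rcomp_prefixSwap_of_eq_append [DecidableEq A] (hXsh : ∀ x ∈ X, shft x ∈ X)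
    {F G : Finset (List A)} {α β γ δ τ : List A} (hγ : γ = β ++ τ) :
    rcomp (prefixSwap X F α β) (prefixSwap X G γ δ) =
      prefixSwap X (insert γ (G ∪ F.image (· ++ τ))) (α ++ τ) δ := by
  subst hγ
  ext ⟨x, y⟩
  simp only [prefixSwap, rcomp, commonFollowers, Set.mem_ofPred_eq, Prod.mk.injEq,
    Finset.forall_mem_insert, Finset.forall_mem_union, Finset.forall_mem_image, wcat_append]
  constructor
  · rintro ⟨_, ⟨z, ⟨hz, hG⟩, hβτ, hδ, rfl, rfl⟩, u, ⟨-, hF⟩, hα, -, hu, rfl⟩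
    obtain rfl := wcat_right_injective β hu
    exact ⟨z, ⟨hz, hβτ, hG, hF⟩, hα, hδ, rfl, rfl⟩
  · rintro ⟨z, ⟨hz, hβτ, hG, hF⟩, hα, hδ, rfl, rfl⟩
    exact ⟨_, ⟨z, ⟨hz, hG⟩, hβτ, hδ, rfl, rfl⟩,
      _, ⟨mem_of_wcat_mem hXsh hβτ, hF⟩, hα, hβτ, rfl, rfl⟩

theorem rcomp_prefixSwap_eq_empty {F G : Finset (List A)} {α β γ δ : List A}
    (hβγ : ¬β <+: γ) (hγβ : ¬γ <+: β) :
    rcomp (prefixSwap X F α β) (prefixSwap X G γ δ) = ∅ := by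
  refine Set.eq_empty_iff_forall_notMem.2 ?_
  rintro _ ⟨_, ⟨z, -, -, -, hz⟩, u, -, -, -, hu⟩
  have : wcat γ z = wcat β u := (Prod.ext_iff.1 hz).2.symm.trans (Prod.ext_iff.1 hu).1
  exact (prefix_or_prefix_of_wcat_eq_wcat this).elim hγβ hβγ

theorem rcomp_prefixSwap_mem_SXset (hXsh : ∀ x ∈ X, shft x ∈ X) (F G : Finset (List A))
    (α β γ δ : List A) : rcomp (prefixSwap X F α β) (prefixSwap X G γ δ) ∈ SXset X := by
  classical
  rw [mem_SXset_iff hXsh]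
  by_cases hβγ : β <+: γ
  · obtain ⟨τ, rfl⟩ := hβγ
    exact .inr ⟨_, _, _, rcomp_prefixSwap_of_eq_append hXsh rfl⟩
  by_cases hγβ : γ <+: β
  · obtain ⟨τ, rfl⟩ := hγβ
    -- the mirror image of the first case, after inverting both factors
    rw [rcomp_eq_rinv_rcomp_rinv, rinv_prefixSwap, rinv_prefixSwap,
      rcomp_prefixSwap_of_eq_append hXsh rfl, rinv_prefixSwap]
    exact .inr ⟨_, _, _, rfl⟩
  exact .inl (rcomp_prefixSwap_eq_empty hβγ hγβ)

theorem rinv_mem_SXset (hXsh : ∀ x ∈ X, shft x ∈ X) {r : PB A} (hr : r ∈ SXset X) :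
    rinv r ∈ SXset X := by
  rw [mem_SXset_iff hXsh] at hr ⊢
  rcases hr with rfl | ⟨F, α, β, rfl⟩
  · exact .inl rinv_empty
  · exact .inr ⟨F, β, α, rinv_prefixSwap F α β⟩

theorem rcomp_mem_SXset (hXsh : ∀ x ∈ X, shft x ∈ X) {r s : PB A} (hr : r ∈ SXset X)
    (hs : s ∈ SXset X) : rcomp r s ∈ SXset X := by
  rw [mem_SXset_iff hXsh] at hr hs
  rcases hr with rfl | ⟨F, α, β, rfl⟩
  · simpa using empty_mem_SXset
  rcases hs with rfl | ⟨G, γ, δ, rfl⟩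
  · simpa using empty_mem_SXset
  exact rcomp_prefixSwap_mem_SXset hXsh F G α β γ δ

end

theorem stmt4_general {A : Type*} (X : Set (ℕ → A)) (hXsh : ∀ x ∈ X, shft x ∈ X) :
    {r : PB A | GenSX X r} = SXset X := by
  refine Set.Subset.antisymm (fun r (hr : GenSX X r) => ?_) fun r hr => ?_
  · induction hr with
    | eps => exact sMap_eq_prefixSwap [] ▸ prefixSwap_mem_SXset _ _ _
    | base a => exact sMap_eq_prefixSwap [a] ▸ prefixSwap_mem_SXset _ _ _
    | zero => exact empty_mem_SXset
    | comp _ _ hr hs => exact rcomp_mem_SXset hXsh hr hs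
    | inv _ hr => exact rinv_mem_SXset hXsh hr
  · rcases (mem_SXset_iff hXsh).1 hr with rfl | ⟨F, α, β, rfl⟩
    · exact .zero
    · exact genSX_prefixSwap hXsh F α β

theorem stmt4 {A : Type*} [Fintype A] [TopologicalSpace A] [DiscreteTopology A]
    (X : Set (ℕ → A)) (hXcl : IsClosed X) (hXsh : ∀ x ∈ X, shft x ∈ X) :
    {r : PB A | GenSX X r} = SXset X :=
  stmt4_general X hXsh
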